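/- arXiv:1311.7564 — 7 statements merged into one kernel-verified Lean document; each statement's English description precedes it below -/
import Mathlib

section
/- Let X be a type and σ : X → X an involution (σ ∘ σ = id). Let I₁ and I₂ be clean subsets of X. Then I₁ ∪ I₂ is clean if and only if at least one of the following holds: (1) σ(I₁) = I₁ and σ(I₂) = I₂; (2) Iᵢ ∩ σ(I_j) = ∅ for all i, j ∈ {1,2}; (3) I₁ = σ(I₂); (4) I₁ ⊆ I₂ or I₂ ⊆ I₁. (Here σ(S) denotes the image of the set S under σ.) -/
/-- A subset `S` of `X` is *clean* with respect to an involution `σ : X → X` if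
either `σ '' S = S` or `S ∩ σ '' S = ∅`. -/
def IsClean {X : Type*} (σ : X → X) (S : Set X) : Prop :=
  σ '' S = S ∨ S ∩ σ '' S = ∅

/-!
If `I₁ ∪ I₂` is disjoint from its image, so is each piece from the image of each piece. If instead
`I₁ ∪ I₂` is `σ`-invariant, then the image of a piece that is disjoint from its own image must lie
in the other piece; applying the involution `σ` turns this into `I₂ ⊆ σ '' I₁` (or symmetrically),
and a case split on how `I₁` and `I₂` are clean yields conditions (1), (3) or (4). The converse
implications are direct computations of `σ '' (I₁ ∪ I₂)`.
-/

open Set Function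

section

variable {X : Type*} {σ : X → X}

theorem union_inter_image_union_eq_empty_iff (I₁ I₂ : Set X) :
    (I₁ ∪ I₂) ∩ σ '' (I₁ ∪ I₂) = ∅ ↔
      I₁ ∩ σ '' I₁ = ∅ ∧ I₁ ∩ σ '' I₂ = ∅ ∧ I₂ ∩ σ '' I₁ = ∅ ∧ I₂ ∩ σ '' I₂ = ∅ := by
  rw [image_union, union_inter_distrib_right, inter_union_distrib_left, inter_union_distrib_left]
  simp only [union_empty_iff, and_assoc]

theorem image_subset_of_image_union_eq {I J : Set X} (h : σ '' (I ∪ J) = I ∪ J)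
    (hJ : J ∩ σ '' J = ∅) : σ '' J ⊆ I :=
  Disjoint.subset_left_of_subset_union (h ▸ image_mono subset_union_right)
    (disjoint_iff_inter_eq_empty.mpr hJ).symm

theorem subset_image_of_image_union_eq (hσ : Involutive σ) {I J : Set X}
    (h : σ '' (I ∪ J) = I ∪ J) (hJ : J ∩ σ '' J = ∅) : J ⊆ σ '' I := by
  rw [hσ.image_eq_preimage_symm, ← image_subset_iff]
  exact image_subset_of_image_union_eq h hJ

theorem IsClean.of_image_union_eq (hσ : Involutive σ) {I₁ I₂ : Set X} (h₁ : IsClean σ I₁)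
    (h₂ : IsClean σ I₂) (h : σ '' (I₁ ∪ I₂) = I₁ ∪ I₂) :
    (σ '' I₁ = I₁ ∧ σ '' I₂ = I₂) ∨ I₁ = σ '' I₂ ∨ I₁ ⊆ I₂ ∨ I₂ ⊆ I₁ := by
  have h' : σ '' (I₂ ∪ I₁) = I₂ ∪ I₁ := union_comm I₁ I₂ ▸ h
  rcases h₁ with hs₁ | hd₁ <;> rcases h₂ with hs₂ | hd₂
  · exact Or.inl ⟨hs₁, hs₂⟩
  · exact Or.inr <| Or.inr <| Or.inr <| hs₁ ▸ subset_image_of_image_union_eq hσ h hd₂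
  · exact Or.inr <| Or.inr <| Or.inl <| hs₂ ▸ subset_image_of_image_union_eq hσ h' hd₁
  · exact Or.inr <| Or.inl <| (subset_image_of_image_union_eq hσ h' hd₁).antisymm
      (image_subset_of_image_union_eq h hd₂)

end

/-- Lemma 2.5: the union of two clean sets is clean iff one of the four conditions holds. -/
theorem clean_union_iff {X : Type*} (σ : X → X) (hσ : σ ∘ σ = id)
    (I₁ I₂ : Set X) (h₁ : IsClean σ I₁) (h₂ : IsClean σ I₂) :
    IsClean σ (I₁ ∪ I₂) ↔
      (σ '' I₁ = I₁ ∧ σ '' I₂ = I₂) ∨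
      (I₁ ∩ σ '' I₁ = ∅ ∧ I₁ ∩ σ '' I₂ = ∅ ∧ I₂ ∩ σ '' I₁ = ∅ ∧ I₂ ∩ σ '' I₂ = ∅) ∨
      I₁ = σ '' I₂ ∨
      (I₁ ⊆ I₂ ∨ I₂ ⊆ I₁) := by
  have hinv : Involutive σ := congrFun hσ
  rw [← union_inter_image_union_eq_empty_iff]
  constructor
  · rintro (hfix | hdisj)
    · rcases h₁.of_image_union_eq hinv h₂ hfix with h | h | h
      exacts [Or.inl h, Or.inr (Or.inr (Or.inl h)), Or.inr (Or.inr (Or.inr h))]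
    · exact Or.inr (Or.inl hdisj)
  · rintro (⟨hs₁, hs₂⟩ | hdisj | rfl | hsub | hsub)
    · exact Or.inl (by rw [image_union, hs₁, hs₂])
    · exact Or.inr hdisj
    · exact Or.inl (by rw [image_union, hinv.leftInverse.image_image, union_comm])
    · rwa [union_eq_self_of_subset_left hsub]
    · rwa [union_eq_self_of_subset_right hsub]
end

section
/- Let p₁, p₂ ∈ X and let rᵢ > 0, r'ᵢ > 0 satisfy r'ᵢ ≤ rᵢ/5 for i = 1, 2. Suppose that B̄(p₂, r'₂) is not contained in B(p₁, r₁) and B̄(p₁, r'₁) is not contained in B(p₂, r₂). Then d(p₁, p₂) ≥ (2/5)(r₁ + r₂). Moreover, setting sᵢ := 2·rᵢ·d(p₁,p₂) / (3(r₁ + r₂)), one has sᵢ ≥ (4/15)·rᵢ > r'ᵢ for i = 1, 2, and B(p₁, s₁) ∩ B(p₂, s₂) = ∅. -/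
/-! If `B̄(q, r')` escapes `B(p, r)`, the triangle inequality gives `d(p, q) ≥ r - r'`; adding the
two such bounds and using `r'ᵢ ≤ rᵢ / 5` yields `d(p₁, p₂) ≥ (2/5)(r₁ + r₂)`. The radii `sᵢ` are
chosen so that `s₁ + s₂ = (2/3) d(p₁, p₂)`, which makes the two balls disjoint, while the lower
bound on the distance gives `sᵢ ≥ (4/15) rᵢ > rᵢ / 5 ≥ r'ᵢ`. -/

open Metric

theorem sub_le_dist_of_not_closedBall_subset_ball {X : Type*} [PseudoMetricSpace X] {p q : X}
    {r r' : ℝ} (h : ¬ closedBall q r' ⊆ ball p r) : r - r' ≤ dist p q := by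
  by_contra! hlt
  exact h (closedBall_subset_ball' (by rw [dist_comm]; linarith))

theorem four_fifteenths_mul_le_div {r R d : ℝ} (hR : 0 < R) (hr : 0 ≤ r) (hd : 2 / 5 * R ≤ d) :
    4 / 15 * r ≤ 2 * r * d / (3 * R) := by
  rw [le_div_iff₀ (by positivity)]
  nlinarith

theorem esDisjAn_case1_general {X : Type*} [MetricSpace X] (p₁ p₂ : X) (r₁ r₂ r₁' r₂' : ℝ)
    (hr₁ : 0 < r₁) (hr₂ : 0 < r₂)
    (hadm₁ : r₁' ≤ r₁ / 5) (hadm₂ : r₂' ≤ r₂ / 5)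
    (hnc₁ : ¬ Metric.closedBall p₂ r₂' ⊆ Metric.ball p₁ r₁)
    (hnc₂ : ¬ Metric.closedBall p₁ r₁' ⊆ Metric.ball p₂ r₂) :
    (2 / 5) * (r₁ + r₂) ≤ dist p₁ p₂ ∧
    ∀ s₁ s₂ : ℝ,
      s₁ = 2 * r₁ * dist p₁ p₂ / (3 * (r₁ + r₂)) →
      s₂ = 2 * r₂ * dist p₁ p₂ / (3 * (r₁ + r₂)) →
      ((4 / 15) * r₁ ≤ s₁ ∧ r₁' < s₁) ∧
      ((4 / 15) * r₂ ≤ s₂ ∧ r₂' < s₂) ∧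
      Metric.ball p₁ s₁ ∩ Metric.ball p₂ s₂ = ∅ := by
  have hd₁ := sub_le_dist_of_not_closedBall_subset_ball hnc₁
  have hd₂ := sub_le_dist_of_not_closedBall_subset_ball hnc₂
  rw [dist_comm] at hd₂
  have hd : 2 / 5 * (r₁ + r₂) ≤ dist p₁ p₂ := by linarith
  refine ⟨hd, fun s₁ s₂ hs₁ hs₂ => ?_⟩
  have hR : 0 < r₁ + r₂ := by linarith
  have hlow₁ : 4 / 15 * r₁ ≤ s₁ := hs₁ ▸ four_fifteenths_mul_le_div hR hr₁.le hd
  have hlow₂ : 4 / 15 * r₂ ≤ s₂ := hs₂ ▸ four_fifteenths_mul_le_div hR hr₂.le hd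
  refine ⟨⟨hlow₁, by linarith⟩, ⟨hlow₂, by linarith⟩, ?_⟩
  have hsum : s₁ + s₂ = 2 / 3 * dist p₁ p₂ := by
    rw [hs₁, hs₂]
    field_simp
  exact Set.disjoint_iff_inter_eq_empty.mp (ball_disjoint_ball (by linarith))

/-- The key metric estimate in the first case of the proof of Lemma 4.23 (EsDisjAn):
if neither inner closed ball is contained in the other outer open ball, then the centers
are far apart, and the balls of radii `sᵢ = 2 rᵢ d(p₁,p₂) / (3(r₁+r₂))` are disjoint,
with `sᵢ ≥ (4/15) rᵢ > r'ᵢ`. -/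
theorem esDisjAn_case1 {X : Type*} [MetricSpace X] (p₁ p₂ : X) (r₁ r₂ r₁' r₂' : ℝ)
    (hr₁ : 0 < r₁) (hr₂ : 0 < r₂) (hr₁' : 0 < r₁') (hr₂' : 0 < r₂')
    (hadm₁ : r₁' ≤ r₁ / 5) (hadm₂ : r₂' ≤ r₂ / 5)
    (hnc₁ : ¬ Metric.closedBall p₂ r₂' ⊆ Metric.ball p₁ r₁)
    (hnc₂ : ¬ Metric.closedBall p₁ r₁' ⊆ Metric.ball p₂ r₂) :
    (2 / 5) * (r₁ + r₂) ≤ dist p₁ p₂ ∧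
    ∀ s₁ s₂ : ℝ,
      s₁ = 2 * r₁ * dist p₁ p₂ / (3 * (r₁ + r₂)) →
      s₂ = 2 * r₂ * dist p₁ p₂ / (3 * (r₁ + r₂)) →
      ((4 / 15) * r₁ ≤ s₁ ∧ r₁' < s₁) ∧
      ((4 / 15) * r₂ ≤ s₂ ∧ r₂' < s₂) ∧
      Metric.ball p₁ s₁ ∩ Metric.ball p₂ s₂ = ∅ :=
  esDisjAn_case1_general p₁ p₂ r₁ r₂ r₁' r₂' hr₁ hr₂ hadm₁ hadm₂ hnc₁ hnc₂
end

section
/- Let p₁, p₂ ∈ X and let rᵢ > 0, r'ᵢ > 0 satisfy r'ᵢ ≤ rᵢ/5 for i = 1, 2. Suppose that B̄(p₁, r'₁) ∩ B̄(p₂, r'₂) ≠ ∅ and that B̄(p₁, r'₁) is not contained in B(p₂, r₂). Then r₂ ≤ (5/2)·r'₁ and d(p₁, p₂) + r₂ ≤ 4·r'₁; consequently B(p₂, r₂) ⊆ B(p₁, 4·r'₁), and in particular the annulus A(r₁, 4r'₁, p₁) = B(p₁, r₁) \ B̄(p₁, 4r'₁) is disjoint from B(p₂, r₂). -/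
/-! The two hypotheses pinch `d(p₁, p₂)`: the balls `B̄(p₁, r'₁)` and `B̄(p₂, r'₂)` meet, so
`d(p₁, p₂) ≤ r'₁ + r'₂ ≤ r'₁ + r₂ / 5`, while `B̄(p₁, r'₁) ⊄ B(p₂, r₂)` forces
`r₂ ≤ r'₁ + d(p₁, p₂)`. Together these give `r₂ ≤ (5/2) r'₁` and `d(p₁, p₂) + r₂ ≤ 4 r'₁`. -/

open Metric

theorem esDisjAn_case2_general {X : Type*} [MetricSpace X] (p₁ p₂ : X) (r₁ r₂ r₁' r₂' : ℝ)
    (hadm₂ : r₂' ≤ r₂ / 5)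
    (hint : (Metric.closedBall p₁ r₁' ∩ Metric.closedBall p₂ r₂').Nonempty)
    (hnc : ¬ Metric.closedBall p₁ r₁' ⊆ Metric.ball p₂ r₂) :
    r₂ ≤ (5 / 2) * r₁' ∧
    dist p₁ p₂ + r₂ ≤ 4 * r₁' ∧
    Metric.ball p₂ r₂ ⊆ Metric.ball p₁ (4 * r₁') ∧
    (Metric.ball p₁ r₁ \ Metric.closedBall p₁ (4 * r₁')) ∩ Metric.ball p₂ r₂ = ∅ := by
  have hmeet : dist p₁ p₂ ≤ r₁' + r₂' := dist_le_add_of_nonempty_closedBall_inter_closedBall hint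
  have hfar : r₂ ≤ r₁' + dist p₁ p₂ := not_lt.1 fun h => hnc (closedBall_subset_ball' h)
  have hsum : dist p₁ p₂ + r₂ ≤ 4 * r₁' := by linarith
  have hball : ball p₂ r₂ ⊆ ball p₁ (4 * r₁') := ball_subset_ball' (by rw [dist_comm]; linarith)
  exact ⟨by linarith, hsum, hball,
    (Set.disjoint_sdiff_left.mono_right (hball.trans ball_subset_closedBall)).inter_eq⟩

/-- The key metric estimate in the second case of the proof of Lemma 4.23 (EsDisjAn):
if the inner closed balls intersect but `B̄(p₁,r'₁)` is not contained in `B(p₂,r₂)`,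
then `r₂ ≤ (5/2) r'₁`, `d(p₁,p₂) + r₂ ≤ 4 r'₁`, hence `B(p₂,r₂) ⊆ B(p₁, 4 r'₁)` and the
annulus `A(r₁, 4 r'₁, p₁)` is disjoint from `B(p₂, r₂)`. -/
theorem esDisjAn_case2 {X : Type*} [MetricSpace X] (p₁ p₂ : X) (r₁ r₂ r₁' r₂' : ℝ)
    (hr₁ : 0 < r₁) (hr₂ : 0 < r₂) (hr₁' : 0 < r₁') (hr₂' : 0 < r₂')
    (hadm₁ : r₁' ≤ r₁ / 5) (hadm₂ : r₂' ≤ r₂ / 5)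
    (hint : (Metric.closedBall p₁ r₁' ∩ Metric.closedBall p₂ r₂').Nonempty)
    (hnc : ¬ Metric.closedBall p₁ r₁' ⊆ Metric.ball p₂ r₂) :
    r₂ ≤ (5 / 2) * r₁' ∧
    dist p₁ p₂ + r₂ ≤ 4 * r₁' ∧
    Metric.ball p₂ r₂ ⊆ Metric.ball p₁ (4 * r₁') ∧
    (Metric.ball p₁ r₁ \ Metric.closedBall p₁ (4 * r₁')) ∩ Metric.ball p₂ r₂ = ∅ :=
  esDisjAn_case2_general p₁ p₂ r₁ r₂ r₁' r₂' hadm₂ hint hnc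
end

section
/- Let p₁, p₂ ∈ X, let rᵢ > 0, r'ᵢ > 0 satisfy r'ᵢ ≤ rᵢ/5 for i = 1, 2, and suppose r₂ ≤ r₁. Set Iᵢ := B(pᵢ, rᵢ) \ B̄(pᵢ, r'ᵢ) and J := (B(p₁, r₁) ∪ B(p₂, r₂)) \ (B̄(p₁, r'₁) ∩ B̄(p₂, r'₂)). Suppose B̄(p₁, r'₁) ∩ B̄(p₂, r'₂) ≠ ∅ and J ≠ I₁ ∪ I₂. Then: (1) d(p₁, p₂) ≤ r'₁ + r'₂; (2) r₂ ≤ (5/2)·r'₁; (3) B̄(p₂, r'₂) ⊆ B(p₁, r₁) and B(p₂, r₂) ⊆ B(p₁, r₁). -/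
/-! Since `I₁ ∪ I₂ ⊆ J` always holds, a point of `J \ (I₁ ∪ I₂)` lies in one inner closed ball
and outside the other outer ball. Near `p₂` this would force `r₁ ≤ r'₁ + 2 r'₂ < r₁`; near `p₁`
it gives `r₂ ≤ r'₁ + d(p₁,p₂) ≤ 2 r'₁ + r₂/5`. Everything else is the triangle inequality. -/

open Metric

theorem Set.nonempty_diff_or_of_union_diff_inter_ne {α : Type*} {A₁ A₂ C₁ C₂ : Set α}
    (h : (A₁ ∪ A₂) \ (C₁ ∩ C₂) ≠ (A₁ \ C₁) ∪ (A₂ \ C₂)) :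
    (C₁ \ A₂).Nonempty ∨ (C₂ \ A₁).Nonempty := by
  by_contra! hempty
  obtain ⟨h₁, h₂⟩ := hempty
  rw [Set.sdiff_eq_empty] at h₁ h₂
  refine h (Set.ext fun x => ⟨?_, ?_⟩)
  · rintro ⟨hA | hA, hC⟩
    · by_cases hC₁ : x ∈ C₁
      exacts [Or.inr ⟨h₁ hC₁, fun hC₂ => hC ⟨hC₁, hC₂⟩⟩, Or.inl ⟨hA, hC₁⟩]
    · by_cases hC₂ : x ∈ C₂
      exacts [Or.inl ⟨h₂ hC₂, fun hC₁ => hC ⟨hC₁, hC₂⟩⟩, Or.inr ⟨hA, hC₂⟩]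
  · rintro (⟨hA, hC⟩ | ⟨hA, hC⟩)
    exacts [⟨Or.inl hA, fun h => hC h.1⟩, ⟨Or.inr hA, fun h => hC h.2⟩]

theorem le_add_dist_of_mem_closedBall_of_notMem_ball {X : Type*} [PseudoMetricSpace X]
    {p q x : X} {a r : ℝ} (hp : x ∈ closedBall p a) (hq : x ∉ ball q r) : r ≤ a + dist p q :=
  not_lt.1 fun h => hq (closedBall_subset_ball' h hp)

theorem dist_le_add_of_closedBall_inter_nonempty {X : Type*} [PseudoMetricSpace X]
    {p q : X} {a b : ℝ} (h : (closedBall p a ∩ closedBall q b).Nonempty) : dist p q ≤ a + b :=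
  not_lt.1 fun hlt => Set.not_disjoint_iff_nonempty_inter.2 h (closedBall_disjoint_closedBall hlt)

theorem lmI1Isharp2I_parts12_general {X : Type*} [MetricSpace X] (p₁ p₂ : X) (r₁ r₂ r₁' r₂' : ℝ)
    (hr₁ : 0 < r₁)
    (hadm₁ : r₁' ≤ r₁ / 5) (hadm₂ : r₂' ≤ r₂ / 5) (hr₂₁ : r₂ ≤ r₁)
    (hint : (Metric.closedBall p₁ r₁' ∩ Metric.closedBall p₂ r₂').Nonempty)
    (hJ : (Metric.ball p₁ r₁ ∪ Metric.ball p₂ r₂) \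
            (Metric.closedBall p₁ r₁' ∩ Metric.closedBall p₂ r₂') ≠
          (Metric.ball p₁ r₁ \ Metric.closedBall p₁ r₁') ∪
            (Metric.ball p₂ r₂ \ Metric.closedBall p₂ r₂')) :
    dist p₁ p₂ ≤ r₁' + r₂' ∧
    r₂ ≤ (5 / 2) * r₁' ∧
    Metric.closedBall p₂ r₂' ⊆ Metric.ball p₁ r₁ ∧
    Metric.ball p₂ r₂ ⊆ Metric.ball p₁ r₁ := by
  have hd : dist p₁ p₂ ≤ r₁' + r₂' := dist_le_add_of_closedBall_inter_nonempty hint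
  have hr₂_le : r₂ ≤ (5 / 2) * r₁' := by
    rcases Set.nonempty_diff_or_of_union_diff_inter_ne hJ with ⟨x, hx₁, hx₂⟩ | ⟨x, hx₂, hx₁⟩
    · linarith [le_add_dist_of_mem_closedBall_of_notMem_ball hx₁ hx₂]
    · have := le_add_dist_of_mem_closedBall_of_notMem_ball hx₂ hx₁
      rw [dist_comm] at this
      linarith
  refine ⟨hd, hr₂_le, closedBall_subset_ball' ?_, ball_subset_ball' ?_⟩ <;> rw [dist_comm] <;> linarith

/-- Parts 1 and 2 of Lemma 4.25 (lmI1Isharp2I): if the inner closed balls meet and the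
minimal annulus `J` differs from `I₁ ∪ I₂`, then `d(p₁,p₂) ≤ r'₁ + r'₂`,
`r₂ ≤ (5/2) r'₁`, and `B̄(p₂,r'₂) ⊆ B(p₁,r₁)`, `B(p₂,r₂) ⊆ B(p₁,r₁)`. -/
theorem lmI1Isharp2I_parts12 {X : Type*} [MetricSpace X] (p₁ p₂ : X) (r₁ r₂ r₁' r₂' : ℝ)
    (hr₁ : 0 < r₁) (hr₂ : 0 < r₂) (hr₁' : 0 < r₁') (hr₂' : 0 < r₂')
    (hadm₁ : r₁' ≤ r₁ / 5) (hadm₂ : r₂' ≤ r₂ / 5) (hr₂₁ : r₂ ≤ r₁)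
    (hint : (Metric.closedBall p₁ r₁' ∩ Metric.closedBall p₂ r₂').Nonempty)
    (hJ : (Metric.ball p₁ r₁ ∪ Metric.ball p₂ r₂) \
            (Metric.closedBall p₁ r₁' ∩ Metric.closedBall p₂ r₂') ≠
          (Metric.ball p₁ r₁ \ Metric.closedBall p₁ r₁') ∪
            (Metric.ball p₂ r₂ \ Metric.closedBall p₂ r₂')) :
    dist p₁ p₂ ≤ r₁' + r₂' ∧
    r₂ ≤ (5 / 2) * r₁' ∧
    Metric.closedBall p₂ r₂' ⊆ Metric.ball p₁ r₁ ∧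
    Metric.ball p₂ r₂ ⊆ Metric.ball p₁ r₁ :=
  lmI1Isharp2I_parts12_general p₁ p₂ r₁ r₂ r₁' r₂' hr₁ hadm₁ hadm₂ hr₂₁ hint hJ
end

section
/- Let p₁, p₂ ∈ X, let rᵢ > 0, r'ᵢ > 0 satisfy r'ᵢ ≤ rᵢ/5 for i = 1, 2, and suppose r₂ ≤ r₁. Set Iᵢ := B(pᵢ, rᵢ) \ B̄(pᵢ, r'ᵢ) and J := (B(p₁, r₁) ∪ B(p₂, r₂)) \ (B̄(p₁, r'₁) ∩ B̄(p₂, r'₂)). Suppose B̄(p₁, r'₁) ∩ B̄(p₂, r'₂) ≠ ∅ and J ≠ I₁ ∪ I₂. Then, setting r := r₁ − d(p₁, p₂), one has J = I₁ ∪ (B(p₂, r) \ B̄(p₂, r'₂)). -/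
/-!
Write `d = dist p₁ p₂` and `Dᵢ = B̄(pᵢ, r'ᵢ)`. Since the inner balls meet, `d ≤ r'₁ + r'₂`, and
admissibility then gives `D₂ ⊆ B(p₁, r₁)`. Whenever also `D₁ ⊆ B(p₂, r₂)`, the minimal annulus is
just `I₁ ∪ I₂`; so the hypothesis `J ≠ I₁ ∪ I₂` forces `r₂ - r'₁ ≤ d`, whence `r₂ ≤ r₁ / 2` and
`d ≤ 3 r₁ / 10`. Then `B(p₂, r₂) ⊆ B(p₂, r₁ - d) ⊆ B(p₁, r₁)` and `D₁ ⊆ B(p₂, r₁ - d)`, so replacing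
`B(p₂, r₂)` by `B(p₂, r₁ - d)` changes neither `J` nor the applicability of the first observation.
-/

open Metric Set

theorem Set.union_diff_inter_eq_diff_union_diff {α : Type*} {B₁ B₂ D₁ D₂ : Set α}
    (h₁ : D₁ ⊆ B₂) (h₂ : D₂ ⊆ B₁) :
    (B₁ ∪ B₂) \ (D₁ ∩ D₂) = B₁ \ D₁ ∪ B₂ \ D₂ := by
  ext x
  have := @h₁ x
  have := @h₂ x
  simp only [mem_sdiff, mem_union, mem_inter_iff]
  tauto

theorem lmI1Isharp2I_part3_general {X : Type*} [MetricSpace X] (p₁ p₂ : X) (r₁ r₂ r₁' r₂' : ℝ)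
    (hr₁ : 0 < r₁)
    (hadm₁ : r₁' ≤ r₁ / 5) (hadm₂ : r₂' ≤ r₂ / 5) (hr₂₁ : r₂ ≤ r₁)
    (hint : (Metric.closedBall p₁ r₁' ∩ Metric.closedBall p₂ r₂').Nonempty)
    (hJ : (Metric.ball p₁ r₁ ∪ Metric.ball p₂ r₂) \
            (Metric.closedBall p₁ r₁' ∩ Metric.closedBall p₂ r₂') ≠
          (Metric.ball p₁ r₁ \ Metric.closedBall p₁ r₁') ∪
            (Metric.ball p₂ r₂ \ Metric.closedBall p₂ r₂')) :
    (Metric.ball p₁ r₁ ∪ Metric.ball p₂ r₂) \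
        (Metric.closedBall p₁ r₁' ∩ Metric.closedBall p₂ r₂') =
      (Metric.ball p₁ r₁ \ Metric.closedBall p₁ r₁') ∪
        (Metric.ball p₂ (r₁ - dist p₁ p₂) \ Metric.closedBall p₂ r₂') := by
  have hd : dist p₁ p₂ ≤ r₁' + r₂' := dist_le_add_of_nonempty_closedBall_inter_closedBall hint
  have hd' : dist p₂ p₁ = dist p₁ p₂ := dist_comm p₂ p₁
  have hD₂ : closedBall p₂ r₂' ⊆ ball p₁ r₁ := closedBall_subset_ball' (by linarith)
  have hfar : r₂ - r₁' ≤ dist p₁ p₂ := by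
    by_contra! hnear
    exact hJ (union_diff_inter_eq_diff_union_diff (closedBall_subset_ball' (by linarith)) hD₂)
  have hB₂ : ball p₂ r₂ ⊆ ball p₂ (r₁ - dist p₁ p₂) := ball_subset_ball (by linarith)
  have hB : ball p₂ (r₁ - dist p₁ p₂) ⊆ ball p₁ r₁ := ball_subset_ball' (by linarith)
  have hD₁ : closedBall p₁ r₁' ⊆ ball p₂ (r₁ - dist p₁ p₂) := closedBall_subset_ball' (by linarith)
  calc _ = (ball p₁ r₁ ∪ ball p₂ (r₁ - dist p₁ p₂)) \ (closedBall p₁ r₁' ∩ closedBall p₂ r₂') := by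
        rw [union_eq_left.2 (hB₂.trans hB), union_eq_left.2 hB]
    _ = _ := union_diff_inter_eq_diff_union_diff hD₁ hD₂

/-- Part 3 of Lemma 4.25 (lmI1Isharp2I): under the same hypotheses, with
`r := r₁ − d(p₁,p₂)`, the minimal annulus `J` equals `I₁ ∪ (B(p₂,r) \ B̄(p₂,r'₂))`. -/
theorem lmI1Isharp2I_part3 {X : Type*} [MetricSpace X] (p₁ p₂ : X) (r₁ r₂ r₁' r₂' : ℝ)
    (hr₁ : 0 < r₁) (hr₂ : 0 < r₂) (hr₁' : 0 < r₁') (hr₂' : 0 < r₂')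
    (hadm₁ : r₁' ≤ r₁ / 5) (hadm₂ : r₂' ≤ r₂ / 5) (hr₂₁ : r₂ ≤ r₁)
    (hint : (Metric.closedBall p₁ r₁' ∩ Metric.closedBall p₂ r₂').Nonempty)
    (hJ : (Metric.ball p₁ r₁ ∪ Metric.ball p₂ r₂) \
            (Metric.closedBall p₁ r₁' ∩ Metric.closedBall p₂ r₂') ≠
          (Metric.ball p₁ r₁ \ Metric.closedBall p₁ r₁') ∪
            (Metric.ball p₂ r₂ \ Metric.closedBall p₂ r₂')) :
    (Metric.ball p₁ r₁ ∪ Metric.ball p₂ r₂) \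
        (Metric.closedBall p₁ r₁' ∩ Metric.closedBall p₂ r₂') =
      (Metric.ball p₁ r₁ \ Metric.closedBall p₁ r₁') ∪
        (Metric.ball p₂ (r₁ - dist p₁ p₂) \ Metric.closedBall p₂ r₂') :=
  lmI1Isharp2I_part3_general p₁ p₂ r₁ r₂ r₁' r₂' hr₁ hadm₁ hadm₂ hr₂₁ hint hJ
end

section
/- Let p₁, p₂, p₃ ∈ X and let rᵢ > 0, r'ᵢ > 0 satisfy rᵢ ≥ 5·r'ᵢ for i = 1, 2, 3. Suppose B̄(p₁, r'₁) ∩ B̄(p₂, r'₂) ≠ ∅ and B̄(p₂, r'₂) ∩ B̄(p₃, r'₃) ≠ ∅. Then either B̄(p₁, r'₁) ⊆ B(p₂, r₂) ∪ B(p₃, r₃), or B̄(p₃, r'₃) ⊆ B(p₁, r₁) ∪ B(p₂, r₂). -/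
/-!
If the first inner ball is not much larger than the middle one (`r₁' < 2 r₂'`), it already lies
in `B(p₂, r₂)`. Otherwise the middle inner ball is small compared to both others, so the smaller
of `B̄(p₁, r₁')`, `B̄(p₃, r₃')` stays within `4` times the larger radius of the larger one's
centre, hence inside its outer ball of radius at least `5` times that.
-/

open Metric Set

theorem closedBall_subset_ball_union_ball_of_le {X : Type*} [PseudoMetricSpace X]
    {p₁ p₂ p₃ : X} {r₂ r₃ r₁' r₂' r₃' : ℝ} (hr₂' : 0 < r₂')
    (hadm₂ : 5 * r₂' ≤ r₂) (hadm₃ : 5 * r₃' ≤ r₃)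
    (h₁₂ : (closedBall p₁ r₁' ∩ closedBall p₂ r₂').Nonempty)
    (h₂₃ : (closedBall p₂ r₂' ∩ closedBall p₃ r₃').Nonempty) (hle : r₁' ≤ r₃') :
    closedBall p₁ r₁' ⊆ ball p₂ r₂ ∪ ball p₃ r₃ := by
  have d₁₂ := dist_le_add_of_nonempty_closedBall_inter_closedBall h₁₂
  have d₂₃ := dist_le_add_of_nonempty_closedBall_inter_closedBall h₂₃
  rcases lt_or_ge r₁' (2 * r₂') with hsmall | hlarge
  · exact (closedBall_subset_ball' (by linarith)).trans subset_union_left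
  · refine (closedBall_subset_ball' ?_).trans subset_union_right
    linarith [dist_triangle p₁ p₂ p₃]

theorem lmRelEq_dichotomy_general {X : Type*} [MetricSpace X] (p₁ p₂ p₃ : X)
    (r₁ r₂ r₃ r₁' r₂' r₃' : ℝ)
    (hr₂' : 0 < r₂')
    (hadm₁ : 5 * r₁' ≤ r₁) (hadm₂ : 5 * r₂' ≤ r₂) (hadm₃ : 5 * r₃' ≤ r₃)
    (h₁₂ : (Metric.closedBall p₁ r₁' ∩ Metric.closedBall p₂ r₂').Nonempty)
    (h₂₃ : (Metric.closedBall p₂ r₂' ∩ Metric.closedBall p₃ r₃').Nonempty) :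
    Metric.closedBall p₁ r₁' ⊆ Metric.ball p₂ r₂ ∪ Metric.ball p₃ r₃ ∨
    Metric.closedBall p₃ r₃' ⊆ Metric.ball p₁ r₁ ∪ Metric.ball p₂ r₂ := by
  rcases le_total r₁' r₃' with h | h
  · exact Or.inl (closedBall_subset_ball_union_ball_of_le hr₂' hadm₂ hadm₃ h₁₂ h₂₃ h)
  · refine Or.inr (union_comm (ball p₂ r₂) _ ▸ ?_)
    exact closedBall_subset_ball_union_ball_of_le hr₂' hadm₂ hadm₁
      (inter_comm _ _ ▸ h₂₃) (inter_comm _ _ ▸ h₁₂) h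

/-- The main metric dichotomy in the proof of Lemma 3.10 (lmRelEq): if the inner closed
balls of three admissible annuli meet consecutively, then either the first inner ball is
contained in the union of the second and third outer balls, or the third inner ball is
contained in the union of the first and second outer balls. -/
theorem lmRelEq_dichotomy {X : Type*} [MetricSpace X] (p₁ p₂ p₃ : X)
    (r₁ r₂ r₃ r₁' r₂' r₃' : ℝ)
    (hr₁ : 0 < r₁) (hr₂ : 0 < r₂) (hr₃ : 0 < r₃)
    (hr₁' : 0 < r₁') (hr₂' : 0 < r₂') (hr₃' : 0 < r₃')
    (hadm₁ : 5 * r₁' ≤ r₁) (hadm₂ : 5 * r₂' ≤ r₂) (hadm₃ : 5 * r₃' ≤ r₃)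
    (h₁₂ : (Metric.closedBall p₁ r₁' ∩ Metric.closedBall p₂ r₂').Nonempty)
    (h₂₃ : (Metric.closedBall p₂ r₂' ∩ Metric.closedBall p₃ r₃').Nonempty) :
    Metric.closedBall p₁ r₁' ⊆ Metric.ball p₂ r₂ ∪ Metric.ball p₃ r₃ ∨
    Metric.closedBall p₃ r₃' ⊆ Metric.ball p₁ r₁ ∪ Metric.ball p₂ r₂ :=
  lmRelEq_dichotomy_general p₁ p₂ p₃ r₁ r₂ r₃ r₁' r₂' r₃' hr₂' hadm₁ hadm₂ hadm₃ h₁₂ h₂₃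
end

section
/- Fix constants c₁, c₂, c₃, δ₁, δ₂ > 0 with δ₂ < δ₁. Let L > 2(c₂ + π). Identify the cylinder of modulus L with (−L/2, L/2) × S¹, where S¹ = ℝ/2πℤ, and for −L/2 ≤ a < b ≤ L/2 write S(a,b) := (a,b) × S¹ and I := S(−L/2, L/2). Let μ be a measure on ℝ × S¹ with continuous density f with respect to the product of Lebesgue measure and Haar measure on S¹. Assume: (gradient inequality) for every ρ₀ with [ρ₀ − π, ρ₀ + π] ⊆ [−L/2, L/2] and every θ ∈ S¹, if μ(S(ρ₀ − π, ρ₀ + π)) ≤ δ₁ then f(ρ₀, θ) ≤ (c₁/π²)·μ(S(ρ₀ − π, ρ₀ + π)); (cylinder inequality) for every t ∈ (c₂, L/2), if μ(I) ≤ δ₂ then μ(S(−(L/2 − t), L/2 − t)) ≤ exp(−c₃·t)·μ(I). Suppose μ(I) ≤ δ₂. Then there is a constant a = (c₁/π²)·exp(c₃·π), depending only on c₁ and c₃, such that for every point (ρ, θ) with |ρ| < L/2 − c₂ − π, one has f(ρ, θ) ≤ a·exp(−c₃·(L/2 − |ρ|))·μ(I). -/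
/-!
The gradient inequality bounds `f (ρ, θ)` by the mass of the window `S(ρ - π, ρ + π)`, which
applies since that mass is at most `μ(I) ≤ δ₂ < δ₁`. With `t = L/2 - |ρ| - π > c₂` the window lies
in the band `S(-(L/2 - t), L/2 - t)`, whose mass the cylinder inequality bounds by
`exp(-c₃ t) μ(I) = exp(c₃ π) exp(-c₃ (L/2 - |ρ|)) μ(I)`.
-/

open MeasureTheory

instance : Fact (0 < 2 * Real.pi) := ⟨by positivity⟩

open Set

theorem Set.Ioo_sub_add_subset_Ioo_neg {α : Type*} [AddCommGroup α] [LinearOrder α]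
    [IsOrderedAddMonoid α] {ρ r s : α} (h : |ρ| + r ≤ s) :
    Ioo (ρ - r) (ρ + r) ⊆ Ioo (-s) s :=
  Ioo_subset_Ioo (by have := neg_abs_le ρ; grind) (by have := le_abs_self ρ; grind)

theorem expCylDEst_general (c₁ c₂ c₃ δ₁ δ₂ L : ℝ)
    (hc₁ : 0 < c₁) (hc₂ : 0 < c₂)
    (hδ : δ₂ < δ₁)
    (f : ℝ × AddCircle (2 * Real.pi) → ℝ)
    (μ : Measure (ℝ × AddCircle (2 * Real.pi)))
    -- gradient inequality
    (grad : ∀ (ρ₀ : ℝ) (θ : AddCircle (2 * Real.pi)),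
      -(L / 2) ≤ ρ₀ - Real.pi → ρ₀ + Real.pi ≤ L / 2 →
      μ (Set.Ioo (ρ₀ - Real.pi) (ρ₀ + Real.pi) ×ˢ Set.univ) ≤ ENNReal.ofReal δ₁ →
      f (ρ₀, θ) ≤ c₁ / Real.pi ^ 2 *
        (μ (Set.Ioo (ρ₀ - Real.pi) (ρ₀ + Real.pi) ×ˢ Set.univ)).toReal)
    -- cylinder inequality
    (cyl : ∀ t : ℝ, c₂ < t → t < L / 2 →
      μ (Set.Ioo (-(L / 2)) (L / 2) ×ˢ Set.univ) ≤ ENNReal.ofReal δ₂ →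
      (μ (Set.Ioo (-(L / 2 - t)) (L / 2 - t) ×ˢ Set.univ)).toReal ≤
        Real.exp (-(c₃ * t)) * (μ (Set.Ioo (-(L / 2)) (L / 2) ×ˢ Set.univ)).toReal)
    (hmass : μ (Set.Ioo (-(L / 2)) (L / 2) ×ˢ Set.univ) ≤ ENNReal.ofReal δ₂) :
    ∀ (ρ : ℝ) (θ : AddCircle (2 * Real.pi)), |ρ| < L / 2 - c₂ - Real.pi →
      f (ρ, θ) ≤ (c₁ / Real.pi ^ 2 * Real.exp (c₃ * Real.pi)) *
        Real.exp (-(c₃ * (L / 2 - |ρ|))) *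
        (μ (Set.Ioo (-(L / 2)) (L / 2) ×ˢ Set.univ)).toReal := by
  intro ρ θ hρ
  have hπ := Real.pi_pos
  have hρ₀ := abs_nonneg ρ
  set t := L / 2 - |ρ| - Real.pi with ht
  have hwindow : Ioo (ρ - Real.pi) (ρ + Real.pi) ⊆ Ioo (-(L / 2 - t)) (L / 2 - t) :=
    Ioo_sub_add_subset_Ioo_neg (by linarith)
  have hband : Ioo (-(L / 2 - t)) (L / 2 - t) ⊆ Ioo (-(L / 2)) (L / 2) :=
    Ioo_subset_Ioo (by linarith) (by linarith)
  have hband_fin : μ (Ioo (-(L / 2 - t)) (L / 2 - t) ×ˢ univ) ≠ ⊤ :=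
    ne_top_of_le_ne_top ENNReal.ofReal_ne_top
      ((measure_mono (prod_mono hband subset_rfl)).trans hmass)
  have hwindow_small : μ (Ioo (ρ - Real.pi) (ρ + Real.pi) ×ˢ univ) ≤ ENNReal.ofReal δ₁ :=
    (measure_mono (prod_mono (hwindow.trans hband) subset_rfl)).trans
      (hmass.trans (ENNReal.ofReal_le_ofReal hδ.le))
  have hdecay : (μ (Ioo (ρ - Real.pi) (ρ + Real.pi) ×ˢ univ)).toReal ≤
      Real.exp (-(c₃ * t)) * (μ (Ioo (-(L / 2)) (L / 2) ×ˢ univ)).toReal :=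
    (ENNReal.toReal_mono hband_fin (measure_mono (prod_mono hwindow subset_rfl))).trans
      (cyl t (by linarith) (by linarith) hmass)
  calc f (ρ, θ) ≤ c₁ / Real.pi ^ 2 * (μ (Ioo (ρ - Real.pi) (ρ + Real.pi) ×ˢ univ)).toReal :=
        grad ρ θ (by linarith [neg_abs_le ρ]) (by linarith [le_abs_self ρ]) hwindow_small
    _ ≤ c₁ / Real.pi ^ 2 *
        (Real.exp (-(c₃ * t)) * (μ (Ioo (-(L / 2)) (L / 2) ×ˢ univ)).toReal) := by
        gcongr
    _ = _ := by
        rw [show -(c₃ * t) = c₃ * Real.pi + -(c₃ * (L / 2 - |ρ|)) by ring, Real.exp_add]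
        ring

/-- Lemma 3.4 (ExpCylDEst) specialized to the standard flat cylinder
`I = (−L/2, L/2) × S¹` with `S¹ = ℝ/2πℤ`: a measure `μ` with continuous density `f`
with respect to the product of Lebesgue measure and Haar measure, satisfying the
gradient inequality and the cylinder inequality and having total mass `μ(I) ≤ δ₂`,
has density decaying exponentially in the distance from `∂I`:
`f(ρ,θ) ≤ (c₁/π²)·exp(c₃π) · exp(−c₃(L/2 − |ρ|)) · μ(I)`. -/
theorem expCylDEst (c₁ c₂ c₃ δ₁ δ₂ L : ℝ)
    (hc₁ : 0 < c₁) (hc₂ : 0 < c₂) (hc₃ : 0 < c₃)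
    (hδ₁ : 0 < δ₁) (hδ₂ : 0 < δ₂) (hδ : δ₂ < δ₁)
    (hL : 2 * (c₂ + Real.pi) < L)
    (f : ℝ × AddCircle (2 * Real.pi) → ℝ) (hf : Continuous f) (hf0 : ∀ p, 0 ≤ f p)
    (μ : Measure (ℝ × AddCircle (2 * Real.pi)))
    (hμ : μ = volume.withDensity (fun p => ENNReal.ofReal (f p)))
    -- gradient inequality
    (grad : ∀ (ρ₀ : ℝ) (θ : AddCircle (2 * Real.pi)),
      -(L / 2) ≤ ρ₀ - Real.pi → ρ₀ + Real.pi ≤ L / 2 →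
      μ (Set.Ioo (ρ₀ - Real.pi) (ρ₀ + Real.pi) ×ˢ Set.univ) ≤ ENNReal.ofReal δ₁ →
      f (ρ₀, θ) ≤ c₁ / Real.pi ^ 2 *
        (μ (Set.Ioo (ρ₀ - Real.pi) (ρ₀ + Real.pi) ×ˢ Set.univ)).toReal)
    -- cylinder inequality
    (cyl : ∀ t : ℝ, c₂ < t → t < L / 2 →
      μ (Set.Ioo (-(L / 2)) (L / 2) ×ˢ Set.univ) ≤ ENNReal.ofReal δ₂ →
      (μ (Set.Ioo (-(L / 2 - t)) (L / 2 - t) ×ˢ Set.univ)).toReal ≤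
        Real.exp (-(c₃ * t)) * (μ (Set.Ioo (-(L / 2)) (L / 2) ×ˢ Set.univ)).toReal)
    (hmass : μ (Set.Ioo (-(L / 2)) (L / 2) ×ˢ Set.univ) ≤ ENNReal.ofReal δ₂) :
    ∀ (ρ : ℝ) (θ : AddCircle (2 * Real.pi)), |ρ| < L / 2 - c₂ - Real.pi →
      f (ρ, θ) ≤ (c₁ / Real.pi ^ 2 * Real.exp (c₃ * Real.pi)) *
        Real.exp (-(c₃ * (L / 2 - |ρ|))) *
        (μ (Set.Ioo (-(L / 2)) (L / 2) ×ˢ Set.univ)).toReal :=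
  expCylDEst_general c₁ c₂ c₃ δ₁ δ₂ L hc₁ hc₂ hδ f μ grad cyl hmass
end
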